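/- Let X_d : [0,T] → V be a solution (in a real inner product space V) of Ẋ_d(t) = c_d(λ(t) n(t) − λ(t) κ_d X_d(t)) where λ(t) ≥ 0, ‖n(t)‖ ≤ 1, c_d ≥ 0, κ_d > 0. If ‖X_d(0)‖ ≤ 1/κ_d, then ‖X_d(t)‖ ≤ 1/κ_d for all t ∈ [0,T]. -/

import Mathlib

/-!
The squared norm `g = ‖X_d‖²` satisfies `g' = 2 c_d λ (⟪X_d, n⟫ - κ_d ‖X_d‖²)
≤ 2 c_d λ ‖X_d‖ (1 - κ_d ‖X_d‖)`, which is nonpositive as soon as `‖X_d‖ > 1/κ_d`.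
So `g` can never rise above `1/κ_d²` once it starts below it.
-/

open Set

theorem image_le_of_deriv_right_nonpos_of_lt {f f' : ℝ → ℝ} {a b C : ℝ}
    (hf : ContinuousOn f (Icc a b))
    (hf' : ∀ x ∈ Ico a b, HasDerivWithinAt f (f' x) (Ici x) x) (ha : f a ≤ C)
    (hnonpos : ∀ x ∈ Ico a b, C < f x → f' x ≤ 0) :
    ∀ ⦃x⦄, x ∈ Icc a b → f x ≤ C := by
  intro x hx
  -- Fence `f` by the strictly increasing barriers `C + δ (1 + (t - a))` and let `δ → 0`.
  have fenced : ∀ δ > 0, f x ≤ C + δ * (1 + (x - a)) := by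
    intro δ hδ
    refine image_le_of_deriv_right_lt_deriv_boundary'
      (B := fun t => C + δ * (1 + (t - a))) (B' := fun _ => δ) hf hf'
      (by simp only [sub_self, add_zero, mul_one]; linarith) (by fun_prop) (fun t _ => ?_) (fun t ht hft => ?_) hx
    · simpa using ((((hasDerivAt_id t).sub_const a).const_add 1).const_mul δ).const_add C
        |>.hasDerivWithinAt
    · have hC : C < f t := by rw [hft]; nlinarith [ht.1]
      exact (hnonpos t ht hC).trans_lt hδ
  have hpos : 0 < 1 + (x - a) := by linarith [hx.1]
  refine le_of_forall_pos_le_add fun ε hε => ?_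
  simpa [div_mul_cancel₀ ε hpos.ne'] using fenced (ε / (1 + (x - a))) (div_pos hε hpos)

theorem norm_le_of_inner_deriv_nonpos {V : Type*} [NormedAddCommGroup V] [InnerProductSpace ℝ V]
    {X X' : ℝ → V} {a b R : ℝ} (hX : ContinuousOn X (Icc a b))
    (hX' : ∀ t ∈ Ico a b, HasDerivWithinAt X (X' t) (Ici t) t) (ha : ‖X a‖ ≤ R)
    (hout : ∀ t ∈ Ico a b, R < ‖X t‖ → inner ℝ (X t) (X' t) ≤ 0) :
    ∀ ⦃t⦄, t ∈ Icc a b → ‖X t‖ ≤ R := by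
  have hR : 0 ≤ R := (norm_nonneg _).trans ha
  have hsq : ∀ ⦃t⦄, t ∈ Icc a b → ‖X t‖ ^ 2 ≤ R ^ 2 :=
    image_le_of_deriv_right_nonpos_of_lt (hX.norm.pow 2) (fun t ht => (hX' t ht).norm_sq)
      (pow_le_pow_left₀ (norm_nonneg _) ha 2) fun t ht hlt =>
        by linarith [hout t ht (lt_of_pow_lt_pow_left₀ 2 (norm_nonneg _) hlt)]
  exact fun t ht => (sq_le_sq₀ (norm_nonneg _) hR).1 (hsq ht)

theorem inner_sub_smul_self_nonpos {V : Type*} [NormedAddCommGroup V] [InnerProductSpace ℝ V]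
    {x n : V} {k : ℝ} (hn : ‖n‖ ≤ 1) (hx : 1 ≤ k * ‖x‖) :
    inner ℝ x (n - k • x) ≤ 0 := by
  have hxn : inner ℝ x n ≤ ‖x‖ :=
    (real_inner_le_norm x n).trans (mul_le_of_le_one_right (norm_nonneg x) hn)
  rw [inner_sub_right, real_inner_smul_right, real_inner_self_eq_norm_sq]
  nlinarith [norm_nonneg x]

theorem backstress_bound_general {V : Type*} [NormedAddCommGroup V] [InnerProductSpace ℝ V]
    (T : ℝ) (Xd : ℝ → V)
    (l : ℝ → ℝ) (nv : ℝ → V) (cd kd : ℝ) (hcd : 0 ≤ cd) (hkd : 0 < kd)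
    (hl : ∀ t ∈ Set.Icc 0 T, 0 ≤ l t)
    (hn : ∀ t ∈ Set.Icc 0 T, ‖nv t‖ ≤ 1)
    (hderiv : ∀ t ∈ Set.Icc 0 T,
      HasDerivAt Xd (cd • (l t • nv t - (l t * kd) • Xd t)) t)
    (h0 : ‖Xd 0‖ ≤ 1 / kd) :
    ∀ t ∈ Set.Icc 0 T, ‖Xd t‖ ≤ 1 / kd := by
  refine fun t ht => norm_le_of_inner_deriv_nonpos
    (fun s hs => (hderiv s hs).continuousAt.continuousWithinAt)
    (fun s hs => (hderiv s (Ico_subset_Icc_self hs)).hasDerivWithinAt) h0 (fun s hs hout => ?_) ht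
  replace hs := Ico_subset_Icc_self hs
  have hvel : cd • (l s • nv s - (l s * kd) • Xd s) = (cd * l s) • (nv s - kd • Xd s) := by
    module
  have houtward : 1 ≤ kd * ‖Xd s‖ := by
    rw [div_lt_iff₀' hkd] at hout; exact hout.le
  rw [hvel, real_inner_smul_right]
  exact mul_nonpos_of_nonneg_of_nonpos (mul_nonneg hcd (hl s hs))
    (inner_sub_smul_self_nonpos (hn s hs) houtward)

theorem backstress_bound {V : Type*} [NormedAddCommGroup V] [InnerProductSpace ℝ V]
    [FiniteDimensional ℝ V]
    (T : ℝ) (hT : 0 ≤ T) (Xd : ℝ → V)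
    (l : ℝ → ℝ) (nv : ℝ → V) (cd kd : ℝ) (hcd : 0 ≤ cd) (hkd : 0 < kd)
    (hl : ∀ t ∈ Set.Icc 0 T, 0 ≤ l t)
    (hn : ∀ t ∈ Set.Icc 0 T, ‖nv t‖ ≤ 1)
    (hderiv : ∀ t ∈ Set.Icc 0 T,
      HasDerivAt Xd (cd • (l t • nv t - (l t * kd) • Xd t)) t)
    (h0 : ‖Xd 0‖ ≤ 1 / kd) :
    ∀ t ∈ Set.Icc 0 T, ‖Xd t‖ ≤ 1 / kd :=
  backstress_bound_general T Xd l nv cd kd hcd hkd hl hn hderiv h0
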